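/- For c ∈ ℝ define I(c) = N(c)/D(c) where N(c) = ∫₀^π e^{c cos²θ} (2c(cos²θ − sin²θ) − c² sin²θ cos²θ) sinθ dθ and D(c) = ∫₀^π e^{c cos²θ} sinθ dθ. Then I(c) = −(2c/3) + (2c²/9) + o(c²) as c → 0. In particular, there exists δ > 0 such that I(c) < 0 for all c ∈ (0, δ). -/

import Mathlib

open MeasureTheory Real Asymptotics

/-- The Rayleigh–Ritz quotient I(c) = N(c)/D(c) of the counterexample of
Lemma `counter`. -/
noncomputable def Iq (c : ℝ) : ℝ :=
  (∫ θ in (0:ℝ)..π, Real.exp (c * Real.cos θ ^ 2) *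
      (2 * c * (Real.cos θ ^ 2 - Real.sin θ ^ 2)
        - c ^ 2 * Real.sin θ ^ 2 * Real.cos θ ^ 2) * Real.sin θ) /
  (∫ θ in (0:ℝ)..π, Real.exp (c * Real.cos θ ^ 2) * Real.sin θ)

/-!
An explicit antiderivative gives the exact identity
`N(c) + (5/4 + 3c/2) D(c) = (5/2) e^c`, so only the denominator has to be expanded.
Integrating the second-order Taylor polynomial of `exp` gives
`D(c) = 2 + 2c/3 + c²/5 + O(c³)`, and then `N(c) - (-2c/3 + 2c²/9) D(c) = O(c³)`.
Since `D(0) = 2 ≠ 0` this yields `I(c) = -2c/3 + 2c²/9 + O(c³)`, and the negative linear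
term makes `I(c)` negative for small `c > 0`.
-/

open Filter Topology intervalIntegral

theorem abs_exp_sub_taylor_two_le {x : ℝ} (hx : |x| ≤ 1) :
    |exp x - (1 + x + x ^ 2 / 2)| ≤ 2 / 9 * |x| ^ 3 := by
  have h := Real.exp_bound hx (n := 3) (by norm_num)
  norm_num [Finset.sum_range_succ, Nat.factorial] at h
  linarith

theorem exists_forall_Ioo_neg_of_isLittleO {f : ℝ → ℝ} {a b : ℝ} (ha : a < 0)
    (hf : (fun c => f c - (a * c + b * c ^ 2)) =o[𝓝 0] fun c => c ^ 2) :
    ∃ δ > 0, ∀ c ∈ Set.Ioo 0 δ, f c < 0 := by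
  obtain ⟨ρ, hρ, hbound⟩ := Metric.eventually_nhds_iff.1 (hf.bound one_pos)
  refine ⟨min ρ (-a / (|b| + 1)), lt_min hρ (div_pos (neg_pos.2 ha) (by positivity)),
    fun c ⟨hc0, hcδ⟩ => ?_⟩
  have hcρ : dist c 0 < ρ := by
    rw [dist_zero_right, norm_of_nonneg hc0.le]
    exact hcδ.trans_le (min_le_left _ _)
  have hf_le : f c ≤ a * c + b * c ^ 2 + c ^ 2 := by
    have h := hbound hcρ
    rw [one_mul, norm_of_nonneg (sq_nonneg c), norm_eq_abs] at h
    linarith [le_abs_self (f c - (a * c + b * c ^ 2))]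
  have hc_small : c * (|b| + 1) < -a :=
    (lt_div_iff₀ (by positivity)).1 (hcδ.trans_le (min_le_right _ _))
  nlinarith [mul_le_mul_of_nonneg_right (le_abs_self b) (sq_nonneg c),
    mul_lt_mul_of_pos_left hc_small hc0]

namespace Iq

noncomputable def num (c : ℝ) : ℝ :=
  ∫ θ in (0:ℝ)..π, exp (c * cos θ ^ 2) *
    (2 * c * (cos θ ^ 2 - sin θ ^ 2) - c ^ 2 * sin θ ^ 2 * cos θ ^ 2) * sin θ

noncomputable def den (c : ℝ) : ℝ :=
  ∫ θ in (0:ℝ)..π, exp (c * cos θ ^ 2) * sin θ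

theorem num_div_den (c : ℝ) : num c / den c = Iq c := rfl

/-- With `u = cos θ`, the integrand is `-d/dθ` of `e^{cu²} (cu³/2 + (5/4 - c/2) u)`, which is
`±(5/4) e^c` at `u = ±1`. -/
theorem num_add_mul_den (c : ℝ) : num c + (5 / 4 + 3 * c / 2) * den c = 5 / 2 * exp c := by
  have hderiv : ∀ θ, HasDerivAt
      (fun θ => -(exp (c * cos θ ^ 2) * (c / 2 * cos θ ^ 3 + (5 / 4 - c / 2) * cos θ)))
      (exp (c * cos θ ^ 2) *
          (2 * c * (cos θ ^ 2 - sin θ ^ 2) - c ^ 2 * sin θ ^ 2 * cos θ ^ 2) * sin θ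
        + (5 / 4 + 3 * c / 2) * (exp (c * cos θ ^ 2) * sin θ)) θ := by
    intro θ
    have hcos := hasDerivAt_cos θ
    have h := (((hcos.pow 2).const_mul c).exp.mul
      (((hcos.pow 3).const_mul (c / 2)).add (hcos.const_mul (5 / 4 - c / 2)))).neg
    exact h.congr_deriv (by simp only [Pi.add_apply, Pi.pow_apply]; rw [sin_sq θ]; ring)
  have hint : ∀ f : ℝ → ℝ, Continuous f → IntervalIntegrable f volume 0 π :=
    fun f hf => hf.intervalIntegrable 0 π
  rw [num, den, ← intervalIntegral.integral_const_mul,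
    ← integral_add (hint _ (by fun_prop)) (hint _ (by fun_prop)),
    integral_eq_sub_of_hasDerivAt (fun θ _ => hderiv θ) (hint _ (by fun_prop))]
  norm_num [cos_pi]
  ring

theorem integral_taylor_mul_sin (c : ℝ) :
    ∫ θ in (0:ℝ)..π, (1 + c * cos θ ^ 2 + (c * cos θ ^ 2) ^ 2 / 2) * sin θ
      = 2 + 2 * c / 3 + c ^ 2 / 5 := by
  have hderiv : ∀ θ, HasDerivAt (fun θ => -(cos θ + c * cos θ ^ 3 / 3 + c ^ 2 * cos θ ^ 5 / 10))
      ((1 + c * cos θ ^ 2 + (c * cos θ ^ 2) ^ 2 / 2) * sin θ) θ := by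
    intro θ
    have hcos := hasDerivAt_cos θ
    have h := ((hcos.add (((hcos.pow 3).const_mul c).div_const 3)).add
      (((hcos.pow 5).const_mul (c ^ 2)).div_const 10)).neg
    exact h.congr_deriv (by ring)
  rw [integral_eq_sub_of_hasDerivAt (fun θ _ => hderiv θ)
    ((by fun_prop : Continuous _).intervalIntegrable 0 π)]
  simp only [cos_pi, cos_zero]
  ring

theorem abs_den_sub_le {c : ℝ} (hc : |c| ≤ 1) :
    |den c - (2 + 2 * c / 3 + c ^ 2 / 5)| ≤ |c| ^ 3 := by
  have hbound : ∀ θ ∈ Set.uIoc 0 π, ‖(exp (c * cos θ ^ 2)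
      - (1 + c * cos θ ^ 2 + (c * cos θ ^ 2) ^ 2 / 2)) * sin θ‖ ≤ 2 / 9 * |c| ^ 3 := by
    intro θ _
    have hx : |c * cos θ ^ 2| ≤ |c| := by
      rw [abs_mul, abs_of_nonneg (sq_nonneg (cos θ))]
      exact mul_le_of_le_one_right (abs_nonneg c) (cos_sq_le_one θ)
    rw [norm_mul, norm_eq_abs, norm_eq_abs]
    calc _ ≤ 2 / 9 * |c * cos θ ^ 2| ^ 3 * 1 :=
          mul_le_mul (abs_exp_sub_taylor_two_le (hx.trans hc)) (abs_sin_le_one θ)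
            (abs_nonneg _) (by positivity)
      _ ≤ 2 / 9 * |c| ^ 3 := by rw [mul_one]; gcongr
  have hsub : den c - (2 + 2 * c / 3 + c ^ 2 / 5) = ∫ θ in (0:ℝ)..π, (exp (c * cos θ ^ 2)
      - (1 + c * cos θ ^ 2 + (c * cos θ ^ 2) ^ 2 / 2)) * sin θ := by
    rw [← integral_taylor_mul_sin, den, ← integral_sub
      ((by fun_prop : Continuous _).intervalIntegrable 0 π)
      ((by fun_prop : Continuous _).intervalIntegrable 0 π)]
    congr 1
    ext θ
    ring
  calc _ ≤ 2 / 9 * |c| ^ 3 * |π - 0| := by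
        rw [hsub]; exact norm_integral_le_of_norm_le_const hbound
    _ ≤ |c| ^ 3 := by
        rw [sub_zero, abs_of_pos pi_pos]
        nlinarith [pi_lt_four, pow_nonneg (abs_nonneg c) 3]

theorem den_sub_isBigO :
    (fun c => den c - (2 + 2 * c / 3 + c ^ 2 / 5)) =O[𝓝 0] (· ^ 3) := by
  refine IsBigO.of_bound 1 ?_
  filter_upwards [Metric.closedBall_mem_nhds (0:ℝ) one_pos] with c hc
  rw [Metric.mem_closedBall, dist_zero_right, norm_eq_abs] at hc
  simpa only [norm_eq_abs, abs_pow, one_mul] using abs_den_sub_le hc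

theorem tendsto_den : Tendsto den (𝓝 0) (𝓝 2) := by
  have hsub := den_sub_isBigO.trans_tendsto ((continuous_pow 3).tendsto' 0 0 (by norm_num))
  have hpoly : Tendsto (fun c : ℝ => 2 + 2 * c / 3 + c ^ 2 / 5) (𝓝 0) (𝓝 2) :=
    (by fun_prop : Continuous _).tendsto' 0 2 (by norm_num)
  simpa using hsub.add hpoly

theorem sub_isBigO :
    (fun c => Iq c - (-(2 * c / 3) + 2 * c ^ 2 / 9)) =O[𝓝 0] (· ^ 3) := by
  have hexp : (fun c => exp c - (1 + c + c ^ 2 / 2)) =O[𝓝 0] (· ^ 3) := by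
    simpa [Finset.sum_range_succ, add_assoc] using Real.exp_sub_sum_range_isBigO_pow 3
  have hq : (fun c : ℝ => 5 / 4 + 5 * c / 6 + 2 * c ^ 2 / 9) =O[𝓝 0] (fun _ => (1:ℝ)) :=
    ((by fun_prop : Continuous _).tendsto 0).isBigO_one ℝ
  have hpoly : (fun c : ℝ => 17 / 54 * c ^ 3 + 2 / 45 * c ^ 4) =O[𝓝 0] (· ^ 3) :=
    (isBigO_refl _ _).const_mul_left _ |>.add
      ((isLittleO_pow_pow (by norm_num : 3 < 4)).isBigO.const_mul_left _)
  -- `num - P den = 5/2 (e^c - T) - q (den - Dp) - (17/54 c³ + 2/45 c⁴)`, where `P`, `T`, `Dp`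
  -- are the expansions of `Iq`, `exp`, `den` and `q = 5/4 + 3c/2 + P`.
  have hnum : (fun c => num c - (-(2 * c / 3) + 2 * c ^ 2 / 9) * den c) =O[𝓝 0] (· ^ 3) := by
    have hqD := hq.mul den_sub_isBigO
    simp only [one_mul] at hqD
    exact (((hexp.const_mul_left (5 / 2)).sub hqD).sub hpoly).congr_left fun c => by
      linear_combination (-1) * num_add_mul_den c
  have h := hnum.mul ((tendsto_den.inv₀ two_ne_zero).isBigO_one ℝ)
  simp only [mul_one] at h
  refine h.congr' ((tendsto_den.eventually_ne two_ne_zero).mono fun c hc => ?_) .rfl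
  dsimp only
  rw [← num_div_den]
  field_simp

end Iq

/-- I(c) = −2c/3 + 2c²/9 + o(c²) as c → 0, and hence I(c) < 0 for all
sufficiently small positive c. -/
theorem stmt_5 :
    (fun c => Iq c - (-(2 * c / 3) + 2 * c ^ 2 / 9)) =o[nhds (0:ℝ)] (fun c => c ^ 2) ∧
    ∃ δ > (0:ℝ), ∀ c ∈ Set.Ioo (0:ℝ) δ, Iq c < 0 := by
  have hlittle : (fun c => Iq c - (-(2 * c / 3) + 2 * c ^ 2 / 9)) =o[𝓝 0] (fun c => c ^ 2) :=
    Iq.sub_isBigO.trans_isLittleO (isLittleO_pow_pow (by norm_num))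
  refine ⟨hlittle, exists_forall_Ioo_neg_of_isLittleO (a := -2 / 3) (b := 2 / 9) (by norm_num) ?_⟩
  convert hlittle using 3 with c
  ring
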